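/- (Lemma 1, part 1) Suppose (t*, λ*) with λ* ≥ 0 maximizes k(t,λ) := (Δ+1)λmin(D(t,λ)) − t − λc over t ∈ ℝ, λ ≥ 0, and let i be the multiplicity of λmin(A). If λmin(D(t*,λ*)) < λmin(A), then λmin(D(t*,λ*)) is a simple eigenvalue of D(t*,λ*); otherwise (i.e., when λmin(D(t*,λ*)) = λmin(A)), λmin(D(t*,λ*)) has multiplicity i + 1 as an eigenvalue of D(t*,λ*). -/

import Mathlib

open Matrix

/-- The smallest eigenvalue of a real (symmetric) matrix. -/
noncomputable def lambdaMin {ι : Type} [Fintype ι] (M : Matrix ι ι ℝ) : ℝ :=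
  sInf {μ : ℝ | ∃ v : ι → ℝ, v ≠ 0 ∧ M.mulVec v = μ • v}

/-- The multiplicity of the smallest eigenvalue: the dimension of Null(M - λmin(M)·I). -/
noncomputable def eigMult {ι : Type} [Fintype ι] [DecidableEq ι] (M : Matrix ι ι ℝ) : ℕ :=
  Module.finrank ℝ (LinearMap.ker (M - lambdaMin M • (1 : Matrix ι ι ℝ)).mulVecLin)

/-- The bordered matrix D(t) = [[t, -aᵀ],[-a, A]]. -/
noncomputable def borderD {n : ℕ} (A : Matrix (Fin n) (Fin n) ℝ) (a : Fin n → ℝ) (t : ℝ) :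
    Matrix (Unit ⊕ Fin n) (Unit ⊕ Fin n) ℝ :=
  Matrix.fromBlocks (Matrix.of fun (_ : Unit) (_ : Unit) => t)
    (Matrix.of fun (_ : Unit) (j : Fin n) => -a j)
    (Matrix.of fun (i : Fin n) (_ : Unit) => -a i) A

/-- The bordered matrix D(t,λ) = [[t, (-a + (λ/2)b)ᵀ],[-a + (λ/2)b, A]]. -/
noncomputable def borderD2 {n : ℕ} (A : Matrix (Fin n) (Fin n) ℝ) (a b : Fin n → ℝ)
    (t l : ℝ) : Matrix (Unit ⊕ Fin n) (Unit ⊕ Fin n) ℝ :=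
  borderD A (fun j => a j - (l / 2) * b j) t

/-- The objective xᵀAx - 2aᵀx. -/
noncomputable def objQ {n : ℕ} (A : Matrix (Fin n) (Fin n) ℝ) (a : Fin n → ℝ)
    (x : Fin n → ℝ) : ℝ :=
  x ⬝ᵥ A.mulVec x - 2 * (a ⬝ᵥ x)

/-- The optimal value p* of eTRS. -/
noncomputable def pstar {n : ℕ} (A : Matrix (Fin n) (Fin n) ℝ) (a b : Fin n → ℝ)
    (c Δ : ℝ) : ℝ :=
  sInf {v : ℝ | ∃ x : Fin n → ℝ, x ⬝ᵥ x ≤ Δ ∧ b ⬝ᵥ x ≤ c ∧ v = objQ A a x}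

/-- The Lagrangian of eTRS. -/
noncomputable def lagr {n : ℕ} (A : Matrix (Fin n) (Fin n) ℝ) (a b : Fin n → ℝ)
    (c Δ : ℝ) (x : Fin n → ℝ) (l1 l2 : ℝ) : ℝ :=
  objQ A a x + l1 * (x ⬝ᵥ x - Δ) + l2 * (b ⬝ᵥ x - c)

/-- The Lagrangian dual value d* of eTRS:
the supremum over λ1, λ2 ≥ 0 of inf_x of the Lagrangian, encoded as the supremum of all
values that are lower bounds of the Lagrangian for some admissible multipliers. -/
noncomputable def dstar {n : ℕ} (A : Matrix (Fin n) (Fin n) ℝ) (a b : Fin n → ℝ)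
    (c Δ : ℝ) : ℝ :=
  sSup {v : ℝ | ∃ l1 l2 : ℝ, 0 ≤ l1 ∧ 0 ≤ l2 ∧ ∀ x : Fin n → ℝ, v ≤ lagr A a b c Δ x l1 l2}

/-- x is a global optimal solution of eTRS. -/
def isOptimal {n : ℕ} (A : Matrix (Fin n) (Fin n) ℝ) (a b : Fin n → ℝ)
    (c Δ : ℝ) (x : Fin n → ℝ) : Prop :=
  x ⬝ᵥ x ≤ Δ ∧ b ⬝ᵥ x ≤ c ∧
    ∀ y : Fin n → ℝ, y ⬝ᵥ y ≤ Δ → b ⬝ᵥ y ≤ c → objQ A a x ≤ objQ A a y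

/-- The dual objective k(t,λ) = (Δ+1)·λmin(D(t,λ)) - t - λc. -/
noncomputable def ktl {n : ℕ} (A : Matrix (Fin n) (Fin n) ℝ) (a b : Fin n → ℝ)
    (c Δ : ℝ) (t l : ℝ) : ℝ :=
  (Δ + 1) * lambdaMin (borderD2 A a b t l) - t - l * c

/-!
Write `μ = λmin(D(t*, λ*))`, `a' = a - (λ*/2) b` and `P = A - μ I`. Since `D - μ I` is positive
semidefinite, its quadratic form on vectors `(x, q)` with `q ∈ ker P` is `(t* - μ) x² - 2 x a'ᵀq`,
so `a' ⊥ ker P`, i.e. `a' = P z` for some `z`. Completing the square,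
`vᵀ(D(t) - μ I)v = (t - μ - zᵀPz) v₀² + (Lv)ᵀ P (Lv)` with `Lv = v_tail - v₀ z`;
at `v = (1, z)` this gives `t* ≥ μ + zᵀPz`. Equality holds: when `μ < λmin(A)` because every
`μ`-eigenvector of `D` has `v₀ ≠ 0`, and when `μ = λmin(A)` because otherwise lowering `t` to
`μ + zᵀPz` keeps `λmin(D) ≥ μ` and strictly increases `k`. At equality `D - μ I = Lᵀ P L` with `L`
surjective, so `dim ker (D - μ I) = dim ker P + 1`, and `dim ker P` is `0`, resp. `i`.
-/

theorem LinearMap.finrank_ker_comp_of_surjective {K V W U : Type*} [DivisionRing K]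
    [AddCommGroup V] [Module K V] [AddCommGroup W] [Module K W] [AddCommGroup U] [Module K U]
    [FiniteDimensional K V] [FiniteDimensional K W] (f : W →ₗ[K] U) {g : V →ₗ[K] W}
    (hg : Function.Surjective g) :
    Module.finrank K (ker (f ∘ₗ g)) = Module.finrank K (ker f) + Module.finrank K (ker g) := by
  have hfg := (f ∘ₗ g).finrank_range_add_finrank_ker
  have hf := f.finrank_range_add_finrank_ker
  have hg' := g.finrank_range_add_finrank_ker
  rw [range_comp_of_range_eq_top f (range_eq_top.2 hg)] at hfg
  rw [range_eq_top.2 hg, finrank_top] at hg'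
  omega

theorem Matrix.IsHermitian.dotProduct_mulVec_comm {ι : Type*} [Fintype ι] {M : Matrix ι ι ℝ}
    (hM : M.IsHermitian) (u w : ι → ℝ) : u ⬝ᵥ M *ᵥ w = w ⬝ᵥ M *ᵥ u := by
  rw [dotProduct_mulVec, ← mulVec_transpose, ← conjTranspose_eq_transpose_of_trivial, hM.eq,
    dotProduct_comm]

theorem Matrix.IsHermitian.sub_smul_one {ι : Type*} [DecidableEq ι] {M : Matrix ι ι ℝ}
    (hM : M.IsHermitian) (μ : ℝ) : (M - μ • 1).IsHermitian :=
  hM.sub (isHermitian_one.smul (IsSelfAdjoint.all μ))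

theorem Matrix.IsHermitian.exists_mulVec_eq {ι : Type*} [Fintype ι] [DecidableEq ι]
    {M : Matrix ι ι ℝ} (hM : M.IsHermitian) {a : ι → ℝ} (ha : ∀ q, M *ᵥ q = 0 → a ⬝ᵥ q = 0) :
    ∃ z, M *ᵥ z = a := by
  have hrange : WithLp.toLp 2 a ∈ LinearMap.range M.toEuclideanLin := by
    rw [← Submodule.orthogonal_orthogonal (LinearMap.range _),
      (isSymmetric_toEuclideanLin_iff.2 hM).orthogonal_range]
    intro q hq
    rw [LinearMap.mem_ker, toLpLin_apply] at hq
    have := ha q.ofLp (by simpa using congrArg WithLp.ofLp hq)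
    simp [EuclideanSpace.inner_eq_star_dotProduct, this]
  obtain ⟨z, hz⟩ := hrange
  exact ⟨z.ofLp, by simpa using congrArg WithLp.ofLp hz⟩

section Spectrum

variable {ι : Type} [Fintype ι] [DecidableEq ι]

theorem setOf_mulVec_eq_smul_eq_spectrum (M : Matrix ι ι ℝ) :
    {μ : ℝ | ∃ v : ι → ℝ, v ≠ 0 ∧ M *ᵥ v = μ • v} = spectrum ℝ M := by
  ext μ
  rw [← spectrum_toLin', ← Module.End.hasEigenvalue_iff_mem_spectrum,
    Module.End.hasEigenvalue_iff, Submodule.ne_bot_iff]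
  simp only [Module.End.mem_eigenspace_iff, toLin'_apply, Set.mem_ofPred_eq]
  exact ⟨fun ⟨v, hv, hMv⟩ => ⟨v, hMv, hv⟩, fun ⟨v, hMv, hv⟩ => ⟨v, hv, hMv⟩⟩

theorem lambdaMin_eq_sInf_spectrum (M : Matrix ι ι ℝ) : lambdaMin M = sInf (spectrum ℝ M) := by
  rw [lambdaMin, ← setOf_mulVec_eq_smul_eq_spectrum]

theorem lambdaMin_le_of_mulVec_eq_smul {M : Matrix ι ι ℝ} {μ : ℝ} {v : ι → ℝ} (hv : v ≠ 0)
    (hMv : M *ᵥ v = μ • v) : lambdaMin M ≤ μ := by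
  rw [lambdaMin_eq_sInf_spectrum]
  refine csInf_le M.finite_spectrum.bddBelow ?_
  rw [← setOf_mulVec_eq_smul_eq_spectrum]
  exact ⟨v, hv, hMv⟩

theorem lambdaMin_mem_spectrum [Nonempty ι] {M : Matrix ι ι ℝ} (hM : M.IsHermitian) :
    lambdaMin M ∈ spectrum ℝ M := by
  rw [lambdaMin_eq_sInf_spectrum, hM.spectrum_real_eq_range_eigenvalues]
  exact (Set.range_nonempty _).csInf_mem (Set.finite_range _)

theorem exists_mulVec_eq_lambdaMin_smul [Nonempty ι] {M : Matrix ι ι ℝ} (hM : M.IsHermitian) :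
    ∃ v : ι → ℝ, v ≠ 0 ∧ M *ᵥ v = lambdaMin M • v := by
  have := lambdaMin_mem_spectrum hM
  rwa [← setOf_mulVec_eq_smul_eq_spectrum] at this

theorem ker_sub_smul_one_eq_bot {M : Matrix ι ι ℝ} {μ : ℝ} (hμ : μ < lambdaMin M) :
    LinearMap.ker (M - μ • 1).mulVecLin = ⊥ := by
  refine LinearMap.ker_eq_bot'.2 fun v hv => ?_
  by_contra hv0
  rw [mulVecLin_apply, sub_mulVec, smul_mulVec, one_mulVec, sub_eq_zero] at hv
  exact (lambdaMin_le_of_mulVec_eq_smul hv0 hv).not_gt hμ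

theorem mem_spectrum_sub_smul_one {M : Matrix ι ι ℝ} {μ x : ℝ} :
    x ∈ spectrum ℝ (M - μ • 1) ↔ x + μ ∈ spectrum ℝ M := by
  simp only [← setOf_mulVec_eq_smul_eq_spectrum, Set.mem_ofPred_eq, sub_mulVec, smul_mulVec,
    one_mulVec, sub_eq_iff_eq_add, add_smul]

theorem posSemidef_sub_smul_one_of_le_lambdaMin {M : Matrix ι ι ℝ} (hM : M.IsHermitian) {μ : ℝ}
    (hμ : μ ≤ lambdaMin M) : (M - μ • 1).PosSemidef := by
  refine posSemidef_iff_isHermitian_and_spectrum_nonneg.2 ⟨hM.sub_smul_one μ, fun x hx => ?_⟩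
  rw [mem_spectrum_sub_smul_one, ← setOf_mulVec_eq_smul_eq_spectrum] at hx
  obtain ⟨v, hv, hMv⟩ := hx
  have := lambdaMin_le_of_mulVec_eq_smul hv hMv
  show 0 ≤ x
  linarith

theorem le_lambdaMin_of_posSemidef_sub_smul_one [Nonempty ι] {M : Matrix ι ι ℝ}
    (hM : M.IsHermitian) {μ : ℝ} (hμ : (M - μ • 1).PosSemidef) : μ ≤ lambdaMin M := by
  have := (posSemidef_iff_isHermitian_and_spectrum_nonneg.1 hμ).2
    (mem_spectrum_sub_smul_one.2 (by rw [sub_add_cancel]; exact lambdaMin_mem_spectrum hM))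
  exact sub_nonneg.1 this

end Spectrum

section Border

variable {n : ℕ}

theorem borderD_isHermitian {A : Matrix (Fin n) (Fin n) ℝ} (hA : A.IsHermitian) (a : Fin n → ℝ)
    (t : ℝ) : (borderD A a t).IsHermitian := by
  refine IsHermitian.fromBlocks ?_ ?_ hA <;> ext <;> simp [conjTranspose]

theorem borderD_sub_smul_one (A : Matrix (Fin n) (Fin n) ℝ) (a : Fin n → ℝ) (t μ : ℝ) :
    borderD A a t - μ • 1 = borderD (A - μ • 1) a (t - μ) := by
  rw [borderD, borderD, ← fromBlocks_one, fromBlocks_smul, sub_eq_add_neg, fromBlocks_neg,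
    fromBlocks_add]
  congr 1 <;> ext <;> simp [sub_eq_add_neg]

theorem borderD_mulVec_inl (A : Matrix (Fin n) (Fin n) ℝ) (a : Fin n → ℝ) (t : ℝ)
    (v : Unit ⊕ Fin n → ℝ) :
    (borderD A a t *ᵥ v) (Sum.inl ()) = t * v (Sum.inl ()) - a ⬝ᵥ (v ∘ Sum.inr) := by
  simp [borderD, mulVec, dotProduct, Fintype.sum_sum_type, sub_eq_add_neg]

theorem borderD_mulVec_inr (A : Matrix (Fin n) (Fin n) ℝ) (a : Fin n → ℝ) (t : ℝ)
    (v : Unit ⊕ Fin n → ℝ) :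
    (borderD A a t *ᵥ v) ∘ Sum.inr = A *ᵥ (v ∘ Sum.inr) - v (Sum.inl ()) • a := by
  ext i
  simp [borderD, mulVec, dotProduct, Fintype.sum_sum_type]
  ring

theorem dotProduct_borderD_mulVec (A : Matrix (Fin n) (Fin n) ℝ) (a : Fin n → ℝ) (t : ℝ)
    (v : Unit ⊕ Fin n → ℝ) :
    v ⬝ᵥ borderD A a t *ᵥ v = t * v (Sum.inl ()) ^ 2 - 2 * v (Sum.inl ()) * (a ⬝ᵥ (v ∘ Sum.inr))
      + (v ∘ Sum.inr) ⬝ᵥ A *ᵥ (v ∘ Sum.inr) := by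
  have hsplit : ∀ w : Unit ⊕ Fin n → ℝ,
      v ⬝ᵥ w = v (Sum.inl ()) * w (Sum.inl ()) + (v ∘ Sum.inr) ⬝ᵥ (w ∘ Sum.inr) := fun w => by
    simp [dotProduct, Fintype.sum_sum_type]
  rw [hsplit, borderD_mulVec_inl, borderD_mulVec_inr, dotProduct_sub, dotProduct_smul,
    dotProduct_comm _ a, smul_eq_mul]
  ring

def shearTail (z : Fin n → ℝ) : (Unit ⊕ Fin n → ℝ) →ₗ[ℝ] Fin n → ℝ :=
  LinearMap.funLeft ℝ ℝ Sum.inr - (LinearMap.proj (Sum.inl ())).smulRight z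

theorem shearTail_apply (z : Fin n → ℝ) (v : Unit ⊕ Fin n → ℝ) :
    shearTail z v = v ∘ Sum.inr - v (Sum.inl ()) • z := rfl

theorem shearTail_surjective (z : Fin n → ℝ) : Function.Surjective (shearTail z) := by
  intro y
  refine ⟨Sum.elim 0 y, ?_⟩
  simp [shearTail_apply]

theorem finrank_ker_shearTail (z : Fin n → ℝ) :
    Module.finrank ℝ (LinearMap.ker (shearTail z)) = 1 := by
  have h := (shearTail z).finrank_range_add_finrank_ker
  rw [LinearMap.range_eq_top.2 (shearTail_surjective z), finrank_top] at h
  simp only [Module.finrank_fintype_fun_eq_card, Fintype.card_sum, Fintype.card_unit,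
    Fintype.card_fin] at h
  omega

theorem dotProduct_borderD_mulVec_shearTail {P : Matrix (Fin n) (Fin n) ℝ} (hP : P.IsHermitian)
    (z : Fin n → ℝ) (t : ℝ) (v : Unit ⊕ Fin n → ℝ) :
    v ⬝ᵥ borderD P (P *ᵥ z) t *ᵥ v = (t - z ⬝ᵥ P *ᵥ z) * v (Sum.inl ()) ^ 2
      + shearTail z v ⬝ᵥ P *ᵥ shearTail z v := by
  rw [dotProduct_borderD_mulVec, shearTail_apply, dotProduct_comm (P *ᵥ z)]
  simp only [mulVec_sub, mulVec_smul, dotProduct_sub, sub_dotProduct, dotProduct_smul,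
    smul_dotProduct, smul_eq_mul]
  rw [hP.dotProduct_mulVec_comm (v ∘ Sum.inr) z]
  ring

theorem ker_borderD_mulVecLin {P : Matrix (Fin n) (Fin n) ℝ} (hP : P.IsHermitian) (z : Fin n → ℝ) :
    LinearMap.ker (borderD P (P *ᵥ z) (z ⬝ᵥ P *ᵥ z)).mulVecLin
      = LinearMap.ker (P.mulVecLin ∘ₗ shearTail z) := by
  ext v
  simp only [LinearMap.mem_ker, mulVecLin_apply, LinearMap.comp_apply, shearTail_apply,
    mulVec_sub, mulVec_smul]
  constructor
  · intro h
    rw [← borderD_mulVec_inr P (P *ᵥ z) (z ⬝ᵥ P *ᵥ z), h]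
    rfl
  · intro h
    rw [sub_eq_zero] at h
    ext (_ | i)
    · rw [borderD_mulVec_inl, dotProduct_comm (P *ᵥ z), hP.dotProduct_mulVec_comm (v ∘ Sum.inr),
        h, dotProduct_smul, smul_eq_mul, Pi.zero_apply]
      ring
    · rw [← Function.comp_apply (f := borderD P (P *ᵥ z) (z ⬝ᵥ P *ᵥ z) *ᵥ v) (g := Sum.inr),
        borderD_mulVec_inr, h, sub_self]
      rfl

end Border

section Main

variable {n : ℕ} {A : Matrix (Fin n) (Fin n) ℝ}

theorem exists_sub_lambdaMin_borderD_mulVec_eq (hA : A.IsHermitian) (a : Fin n → ℝ) (t : ℝ) :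
    ∃ z, (A - lambdaMin (borderD A a t) • 1) *ᵥ z = a := by
  set μ := lambdaMin (borderD A a t)
  refine (hA.sub_smul_one μ).exists_mulVec_eq fun q hq => ?_
  have hpsd := posSemidef_sub_smul_one_of_le_lambdaMin (borderD_isHermitian hA a t) le_rfl
  rw [borderD_sub_smul_one] at hpsd
  have hquad : ∀ x : ℝ, 0 ≤ (t - μ) * (x * x) + -2 * (a ⬝ᵥ q) * x + 0 := fun x => by
    have := hpsd.dotProduct_mulVec_nonneg (Sum.elim (fun _ => x) q)
    rw [star_trivial, dotProduct_borderD_mulVec, Sum.elim_comp_inr, hq, dotProduct_zero] at this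
    simp only [Sum.elim_inl] at this
    linarith
  have := discrim_le_zero hquad
  rw [discrim] at this
  nlinarith [sq_nonneg (a ⬝ᵥ q)]

theorem borderD_eigenvector_inl_ne_zero {a : Fin n → ℝ} {t μ : ℝ} (hμ : μ < lambdaMin A)
    {v : Unit ⊕ Fin n → ℝ} (hv : v ≠ 0) (hDv : borderD A a t *ᵥ v = μ • v) :
    v (Sum.inl ()) ≠ 0 := by
  intro h0
  have htail : A *ᵥ (v ∘ Sum.inr) = μ • (v ∘ Sum.inr) := by
    have := congrArg (· ∘ Sum.inr) hDv
    rwa [borderD_mulVec_inr, h0, zero_smul, sub_zero] at this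
  have htail0 : v ∘ Sum.inr ≠ 0 := fun hy =>
    hv (funext (Sum.rec (fun _ => h0) (congrFun hy)))
  exact (lambdaMin_le_of_mulVec_eq_smul htail0 htail).not_gt hμ

theorem le_add_of_lambdaMin_borderD_lt {a z : Fin n → ℝ} {t : ℝ} (hA : A.IsHermitian)
    (hlt : lambdaMin (borderD A a t) < lambdaMin A)
    (hz : (A - lambdaMin (borderD A a t) • 1) *ᵥ z = a) :
    t ≤ lambdaMin (borderD A a t) + z ⬝ᵥ (A - lambdaMin (borderD A a t) • 1) *ᵥ z := by
  set μ := lambdaMin (borderD A a t)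
  obtain ⟨v, hv, hDv⟩ := exists_mulVec_eq_lambdaMin_smul (borderD_isHermitian hA a t)
  have hv₀ := borderD_eigenvector_inl_ne_zero hlt hv hDv
  have hzero : v ⬝ᵥ (borderD A a t - μ • 1) *ᵥ v = 0 := by
    rw [sub_mulVec, hDv, smul_mulVec, one_mulVec, sub_self, dotProduct_zero]
  rw [borderD_sub_smul_one, ← hz, dotProduct_borderD_mulVec_shearTail (hA.sub_smul_one μ)]
    at hzero
  have := (posSemidef_sub_smul_one_of_le_lambdaMin hA hlt.le).dotProduct_mulVec_nonneg
    (shearTail z v)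
  rw [star_trivial] at this
  nlinarith [sq_pos_of_ne_zero hv₀]

theorem le_lambdaMin_borderD (hA : A.IsHermitian) {μ : ℝ} (hμ : μ ≤ lambdaMin A)
    (z : Fin n → ℝ) :
    μ ≤ lambdaMin (borderD A ((A - μ • 1) *ᵥ z) (μ + z ⬝ᵥ (A - μ • 1) *ᵥ z)) := by
  have hP := posSemidef_sub_smul_one_of_le_lambdaMin hA hμ
  refine le_lambdaMin_of_posSemidef_sub_smul_one (borderD_isHermitian hA _ _) ?_
  rw [borderD_sub_smul_one, add_sub_cancel_left]
  refine .of_dotProduct_mulVec_nonneg (borderD_isHermitian hP.isHermitian _ _) fun v => ?_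
  rw [star_trivial, dotProduct_borderD_mulVec_shearTail hP.isHermitian, sub_self, zero_mul,
    zero_add]
  simpa using hP.dotProduct_mulVec_nonneg (shearTail z v)

theorem eigMult_borderD {a z : Fin n → ℝ} {t : ℝ} (hA : A.IsHermitian)
    (hz : (A - lambdaMin (borderD A a t) • 1) *ᵥ z = a)
    (ht : t ≤ lambdaMin (borderD A a t) + z ⬝ᵥ (A - lambdaMin (borderD A a t) • 1) *ᵥ z) :
    eigMult (borderD A a t)
      = Module.finrank ℝ (LinearMap.ker (A - lambdaMin (borderD A a t) • 1).mulVecLin) + 1 := by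
  rw [eigMult]
  generalize hμ : lambdaMin (borderD A a t) = μ at hz ht ⊢
  subst hz
  have hP := hA.sub_smul_one μ
  have hge : μ + z ⬝ᵥ (A - μ • 1) *ᵥ z ≤ t := by
    have := (posSemidef_sub_smul_one_of_le_lambdaMin (borderD_isHermitian hA _ t)
      hμ.ge).dotProduct_mulVec_nonneg (Sum.elim (fun _ => 1) z)
    rw [star_trivial, borderD_sub_smul_one, dotProduct_borderD_mulVec_shearTail hP] at this
    simp only [Sum.elim_inl, one_pow, mul_one, shearTail_apply, Sum.elim_comp_inr, one_smul,
      sub_self, mulVec_zero, dotProduct_zero, add_zero, sub_nonneg] at this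
    linarith
  rw [borderD_sub_smul_one, show t - μ = z ⬝ᵥ (A - μ • 1) *ᵥ z by linarith,
    ker_borderD_mulVecLin hP, LinearMap.finrank_ker_comp_of_surjective _ (shearTail_surjective z),
    finrank_ker_shearTail]

end Main

theorem stmt8_general {n : ℕ} (A : Matrix (Fin n) (Fin n) ℝ) (hA : A.IsHermitian)
    (a b : Fin n → ℝ) (c Δ : ℝ) (hΔ : 0 < Δ)
    (ts ls : ℝ) (hls : 0 ≤ ls)
    (hmax : ∀ t l : ℝ, 0 ≤ l → ktl A a b c Δ t l ≤ ktl A a b c Δ ts ls) :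
    (lambdaMin (borderD2 A a b ts ls) < lambdaMin A →
      eigMult (borderD2 A a b ts ls) = 1) ∧
    (lambdaMin (borderD2 A a b ts ls) = lambdaMin A →
      eigMult (borderD2 A a b ts ls) = eigMult A + 1) := by
  set a' : Fin n → ℝ := fun j => a j - ls / 2 * b j
  have hD : ∀ t, borderD2 A a b t ls = borderD A a' t := fun _ => rfl
  simp only [hD]
  set μ := lambdaMin (borderD A a' ts)
  obtain ⟨z, hz⟩ := exists_sub_lambdaMin_borderD_mulVec_eq hA a' ts
  refine ⟨fun hlt => ?_, fun heq => ?_⟩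
  · rw [eigMult_borderD hA hz (le_add_of_lambdaMin_borderD_lt hA hlt hz),
      ker_sub_smul_one_eq_bot hlt, finrank_bot]
  · set ρ := z ⬝ᵥ (A - μ • 1) *ᵥ z
    have hle : μ ≤ lambdaMin (borderD A a' (μ + ρ)) :=
      hz ▸ le_lambdaMin_borderD hA heq.le z
    have hk := hmax (μ + ρ) ls hls
    simp only [ktl, hD] at hk
    have hΔ1 : 0 ≤ Δ + 1 := by linarith
    rw [eigMult_borderD hA hz (by nlinarith [mul_le_mul_of_nonneg_left hle hΔ1]), eigMult, ← heq]

/-- Lemma 1, part 1. -/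
theorem stmt8 {n : ℕ} (hn : 1 ≤ n) (A : Matrix (Fin n) (Fin n) ℝ) (hA : A.IsHermitian)
    (hnpd : ¬ A.PosDef) (a b : Fin n → ℝ) (c Δ : ℝ) (hΔ : 0 < Δ)
    (ts ls : ℝ) (hls : 0 ≤ ls)
    (hmax : ∀ t l : ℝ, 0 ≤ l → ktl A a b c Δ t l ≤ ktl A a b c Δ ts ls) :
    (lambdaMin (borderD2 A a b ts ls) < lambdaMin A →
      eigMult (borderD2 A a b ts ls) = 1) ∧
    (lambdaMin (borderD2 A a b ts ls) = lambdaMin A →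
      eigMult (borderD2 A a b ts ls) = eigMult A + 1) :=
  stmt8_general A hA a b c Δ hΔ ts ls hls hmax
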